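/- For every integer n ≥ 4, the alternating sum Σ_{k=2}^{n} (−1)^{k+1} · c_k is strictly negative, where c_k = (2^{k−1}/k!) · (k−1). -/

import Mathlib

/-!
The sequence `c_k` is nonnegative and decreasing from `k = 3` on, so by the alternating series
bound the tail `c_5 - c_6 + c_7 - ⋯` lies between `0` and `c_5 = 8/15`. The first three terms
contribute `-1 + 4/3 - 1 = -2/3`, hence every partial sum from `n = 4` on is at most
`-2/3 + 8/15 = -2/15`.
-/

noncomputable def cseq (k : ℕ) : ℝ :=
  (2 ^ (k - 1) / (Nat.factorial k : ℝ)) * ((k : ℝ) - 1)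

open Finset

theorem Antitone.alternating_partial_sum_mem_Icc {R : Type*} [Ring R] [PartialOrder R]
    [IsOrderedAddMonoid R] {f : ℕ → R} (hf : Antitone f) (hf0 : ∀ i, 0 ≤ f i) (n : ℕ) :
    ∑ i ∈ range n, (-1) ^ i * f i ∈ Set.Icc 0 (f 0) := by
  induction n generalizing f with
  | zero => simpa using hf0 0
  | succ n ih =>
    obtain ⟨htail_nonneg, htail_le⟩ :=
      ih (hf.comp_monotone fun _ _ h => Nat.succ_le_succ h) fun i => hf0 (i + 1)
    have hf01 : f 1 ≤ f 0 := hf zero_le_one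
    rw [sum_range_succ']
    simp only [pow_succ, mul_neg_one, neg_mul, sum_neg_distrib, pow_zero, one_mul,
      neg_add_eq_sub]
    exact ⟨sub_nonneg.2 (htail_le.trans hf01), sub_le_self _ htail_nonneg⟩

lemma cseq_nonneg {k : ℕ} (hk : 1 ≤ k) : 0 ≤ cseq k := by
  have : (1 : ℝ) ≤ k := by exact_mod_cast hk
  unfold cseq
  exact mul_nonneg (by positivity) (by linarith)

lemma cseq_succ_le {k : ℕ} (hk : 3 ≤ k) : cseq (k + 1) ≤ cseq k := by
  obtain ⟨j, rfl⟩ := Nat.exists_eq_add_of_le' hk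
  rw [cseq, cseq, Nat.factorial_succ, show j + 3 + 1 - 1 = (j + 2) + 1 by omega,
    show j + 3 - 1 = j + 2 by omega, pow_succ]
  push_cast
  rw [div_mul_eq_mul_div, div_mul_eq_mul_div, div_le_div_iff₀ (by positivity) (by positivity)]
  have hpos : (0 : ℝ) ≤ 2 ^ (j + 2) * (j + 3).factorial := by positivity
  have hratio : (2 : ℝ) * (j + 3) ≤ (j + 2) * (j + 4) := by nlinarith [j.cast_nonneg (α := ℝ)]
  nlinarith [mul_le_mul_of_nonneg_left hratio hpos]

lemma cseq_five : cseq 5 = 8 / 15 := by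
  norm_num [cseq, Nat.factorial]

lemma sum_Icc_two_alternating_cseq (m : ℕ) :
    ∑ k ∈ Icc 2 (m + 4), (-1 : ℝ) ^ (k + 1) * cseq k
      = -2 / 3 + ∑ i ∈ range m, (-1) ^ i * cseq (i + 5) := by
  rw [← Ico_add_one_right_eq_Icc, ← sum_Ico_consecutive _ (show 2 ≤ 5 by omega) (by omega),
    sum_Ico_eq_sum_range _ 5, show m + 4 + 1 - 5 = m by omega]
  congr 1
  · norm_num [sum_Ico_succ_top, cseq, Nat.factorial]
  · refine sum_congr rfl fun i _ => ?_
    rw [add_comm 5 i, add_assoc, pow_add]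
    norm_num

/-- For every `n ≥ 4`, the alternating sum `Σ_{k=2}^{n} (−1)^{k+1} c_k` is strictly
negative. -/
theorem alternating_sum_c_neg (n : ℕ) (hn : 4 ≤ n) :
    ∑ k ∈ Finset.Icc 2 n, (-1 : ℝ) ^ (k + 1) * cseq k < 0 := by
  obtain ⟨m, rfl⟩ := Nat.exists_eq_add_of_le' hn
  have hanti : Antitone fun i => cseq (i + 5) :=
    antitone_nat_of_succ_le fun i => cseq_succ_le (by omega)
  have htail := (hanti.alternating_partial_sum_mem_Icc (fun i => cseq_nonneg (by omega)) m).2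
  rw [zero_add, cseq_five] at htail
  rw [sum_Icc_two_alternating_cseq]
  linarith
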